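/- arXiv:2310.20263 — 6 statements merged into one kernel-verified Lean document; each statement's English description precedes it below -/
import Mathlib

section
/- Let W be a topological space, let A and B be path-connected subsets of W, and let x, y ∈ A ∩ B. Suppose that every element of the fundamental group π₁(W, x) can be written as [a] · [b], where a is a loop at x with range contained in A and b is a loop at x with range contained in B. Then there exist paths γ' : [0,1] → W from x to y with range(γ') ⊆ A and γ'' : [0,1] → W from x to y with range(γ'') ⊆ B such that γ' and γ'' are homotopic relative to endpoints in W. -/
/-!
Join `x` to `y` by a path `p` in `A` and a path `q` in `B`, and decompose the loop `p · q⁻¹` as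
`a · b` with `a` in `A` and `b` in `B`. Cancelling in the fundamental groupoid gives
`a⁻¹ · p ≃ b · q`, a path in `A` homotopic to a path in `B`.
-/

theorem Path.Homotopic.Quotient.symm_trans_eq_of_trans_symm_eq {X : Type*} [TopologicalSpace X]
    {x y z : X} {P Q : Path.Homotopic.Quotient x y} {A : Path.Homotopic.Quotient x z}
    {B : Path.Homotopic.Quotient z x} (h : P.trans Q.symm = A.trans B) :
    A.symm.trans P = B.trans Q := by
  calc A.symm.trans P = A.symm.trans ((P.trans Q.symm).trans Q) := by simp
    _ = B.trans Q := by rw [h]; simp [← trans_assoc]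

theorem Path.Homotopic.symm_trans_of_trans_symm {X : Type*} [TopologicalSpace X] {x y z : X}
    {p q : Path x y} {a : Path x z} {b : Path z x}
    (h : (p.trans q.symm).Homotopic (a.trans b)) : (a.symm.trans p).Homotopic (b.trans q) := by
  rw [← Quotient.eq] at h ⊢
  simp only [Quotient.mk_trans, Quotient.mk_symm] at h ⊢
  exact Quotient.symm_trans_eq_of_trans_symm_eq h

/-- If `A` and `B` are path-connected subsets of `W`, `x, y ∈ A ∩ B`, and every
element of `π₁(W, x)` can be written as `[a] · [b]` with `a` a loop at `x` in `A` and `b` a loop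
at `x` in `B`, then there are paths `γ'` from `x` to `y` in `A` and `γ''` from `x` to `y` in `B`
that are homotopic rel endpoints in `W`. -/
theorem exists_whitney_pair_of_pi1_decomposition
    {W : Type*} [TopologicalSpace W] (A B : Set W)
    (hA : IsPathConnected A) (hB : IsPathConnected B)
    (x y : W) (hx : x ∈ A ∩ B) (hy : y ∈ A ∩ B)
    (hdecomp : ∀ ℓ : Path x x, ∃ (a b : Path x x),
      Set.range a ⊆ A ∧ Set.range b ⊆ B ∧ ℓ.Homotopic (a.trans b)) :
    ∃ (γ' γ'' : Path x y), Set.range γ' ⊆ A ∧ Set.range γ'' ⊆ B ∧ γ'.Homotopic γ'' := by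
  obtain ⟨p, hpA⟩ := hA.joinedIn x hx.1 y hy.1
  obtain ⟨q, hqB⟩ := hB.joinedIn x hx.2 y hy.2
  obtain ⟨a, b, haA, hbB, hab⟩ := hdecomp (p.trans q.symm)
  refine ⟨a.symm.trans p, b.trans q, ?_, ?_, hab.symm_trans_of_trans_symm⟩
  · rw [Path.trans_range, Path.symm_range]
    exact Set.union_subset haA (Set.range_subset_iff.2 hpA)
  · rw [Path.trans_range]
    exact Set.union_subset hbB (Set.range_subset_iff.2 hqB)
end

section
/- Let p_X : X̃ → X and p_Y : Ỹ → Y be covering maps whose total spaces are path-connected, locally path-connected and simply connected, let φ, ψ : X → Y be continuous, and let φ̃₀, ψ̃₀ be liftings of φ and ψ respectively. Let δ₁, δ₂ be deck transformations of p_Y. If there exist deck transformations α, γ of p_X and deck transformations η, θ of p_Y such that φ̃₀ ∘ α = η ∘ φ̃₀, ψ̃₀ ∘ γ = θ ∘ ψ̃₀, and δ₂ = η⁻¹ ∘ δ₁ ∘ θ, then the common value class determined by (φ̃₀, δ₁ ∘ ψ̃₀) equals the common value class determined by (φ̃₀, δ₂ ∘ ψ̃₀), i.e. (p_X × p_X)(cvp(φ̃₀,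 δ₁ ∘ ψ̃₀)) = (p_X × p_X)(cvp(φ̃₀, δ₂ ∘ ψ̃₀)). -/
/-- The common value class determined by a pair of liftings `(f, g)`:
the image under `p_X × p_X` of `cvp(f, g) = {(ũ, ṽ) | f ũ = g ṽ}`. -/
def commonValueClass {X X' Y' : Type*} (pX : X' → X) (f g : X' → Y') : Set (X × X) :=
  (fun q : X' × X' => (pX q.1, pX q.2)) '' {q : X' × X' | f q.1 = g q.2}

section CommonValueClass

variable {X X' Y' : Type*} (pX : X' → X) {f g : X' → Y'}

theorem commonValueClass_comp_left {e : Y' → Y'} (he : Function.Injective e) :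
    commonValueClass pX (e ∘ f) (e ∘ g) = commonValueClass pX f g := by
  simp only [commonValueClass, Function.comp_apply, he.eq_iff]

theorem commonValueClass_comp_subset {α γ : X' → X'} (hα : pX ∘ α = pX) (hγ : pX ∘ γ = pX) :
    commonValueClass pX (f ∘ α) (g ∘ γ) ⊆ commonValueClass pX f g := by
  rintro _ ⟨⟨a, b⟩, hab, rfl⟩
  exact ⟨(α a, γ b), hab, by simp only [← congrFun hα a, ← congrFun hγ b, Function.comp_apply]⟩

theorem commonValueClass_comp_equiv {α γ : X' ≃ X'} (hα : pX ∘ α = pX) (hγ : pX ∘ γ = pX) :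
    commonValueClass pX (f ∘ α) (g ∘ γ) = commonValueClass pX f g := by
  have hα' : pX ∘ α.symm = pX := (α.comp_symm_eq _ _).2 hα.symm
  have hγ' : pX ∘ γ.symm = pX := (γ.comp_symm_eq _ _).2 hγ.symm
  refine (commonValueClass_comp_subset pX hα hγ).antisymm ?_
  simpa only [Function.comp_assoc, α.self_comp_symm, γ.self_comp_symm, Function.comp_id]
    using commonValueClass_comp_subset (f := f ∘ α) (g := g ∘ γ) pX hα' hγ'

end CommonValueClass

theorem commonValueClass_eq_of_doubleCoset_general
    {X Y X' Y' : Type*}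
    [TopologicalSpace X'] [TopologicalSpace Y']
    (pX : X' → X) (pY : Y' → Y)
    (φ₀ ψ₀ : X' → Y')
    (δ₁ δ₂ : Y' ≃ₜ Y')
    (h : ∃ (α γ : X' ≃ₜ X') (η θ : Y' ≃ₜ Y'),
      pX ∘ α = pX ∧ pX ∘ γ = pX ∧ pY ∘ η = pY ∧ pY ∘ θ = pY ∧
      φ₀ ∘ α = η ∘ φ₀ ∧ ψ₀ ∘ γ = θ ∘ ψ₀ ∧
      (δ₂ : Y' → Y') = (η.symm : Y' → Y') ∘ (δ₁ : Y' → Y') ∘ (θ : Y' → Y')) :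
    commonValueClass pX φ₀ ((δ₁ : Y' → Y') ∘ ψ₀) =
      commonValueClass pX φ₀ ((δ₂ : Y' → Y') ∘ ψ₀) := by
  obtain ⟨α, γ, η, θ, hα, hγ, -, -, hφα, hψγ, hδ⟩ := h
  have hδ₁θ : (δ₁ : Y' → Y') ∘ θ = η ∘ δ₂ := by
    rw [hδ, ← Function.comp_assoc, η.self_comp_symm, Function.id_comp]
  calc commonValueClass pX φ₀ (δ₁ ∘ ψ₀)
      = commonValueClass pX (φ₀ ∘ α.toEquiv) ((δ₁ ∘ ψ₀) ∘ γ.toEquiv) :=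
        (commonValueClass_comp_equiv pX hα hγ).symm
    _ = commonValueClass pX (η ∘ φ₀) (η ∘ δ₂ ∘ ψ₀) := by
        rw [Homeomorph.coe_toEquiv, Homeomorph.coe_toEquiv, hφα, Function.comp_assoc, hψγ,
          ← Function.comp_assoc, hδ₁θ, Function.comp_assoc]
    _ = commonValueClass pX φ₀ (δ₂ ∘ ψ₀) := commonValueClass_comp_left pX η.injective

/-- If `δ₂ = η⁻¹ ∘ δ₁ ∘ θ` for deck transformations `η, θ` of `p_Y` compatible with
deck transformations `α, γ` of `p_X` via `φ̃₀ ∘ α = η ∘ φ̃₀` and `ψ̃₀ ∘ γ = θ ∘ ψ̃₀`, then the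
common value classes determined by `(φ̃₀, δ₁ ∘ ψ̃₀)` and `(φ̃₀, δ₂ ∘ ψ̃₀)` coincide. -/
theorem commonValueClass_eq_of_doubleCoset
    {X Y X' Y' : Type*} [TopologicalSpace X] [TopologicalSpace Y]
    [TopologicalSpace X'] [TopologicalSpace Y']
    [PathConnectedSpace X'] [LocallyPathConnectedSpace X'] [SimplyConnectedSpace X']
    [PathConnectedSpace Y'] [LocallyPathConnectedSpace Y'] [SimplyConnectedSpace Y']
    (pX : X' → X) (pY : Y' → Y) (hpX : IsCoveringMap pX) (hpY : IsCoveringMap pY)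
    (φ ψ : X → Y) (hφ : Continuous φ) (hψ : Continuous ψ)
    (φ₀ ψ₀ : X' → Y') (hφ₀ : Continuous φ₀) (hψ₀ : Continuous ψ₀)
    (hliftφ : pY ∘ φ₀ = φ ∘ pX) (hliftψ : pY ∘ ψ₀ = ψ ∘ pX)
    (δ₁ δ₂ : Y' ≃ₜ Y') (hδ₁ : pY ∘ δ₁ = pY) (hδ₂ : pY ∘ δ₂ = pY)
    (h : ∃ (α γ : X' ≃ₜ X') (η θ : Y' ≃ₜ Y'),
      pX ∘ α = pX ∧ pX ∘ γ = pX ∧ pY ∘ η = pY ∧ pY ∘ θ = pY ∧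
      φ₀ ∘ α = η ∘ φ₀ ∧ ψ₀ ∘ γ = θ ∘ ψ₀ ∧
      (δ₂ : Y' → Y') = (η.symm : Y' → Y') ∘ (δ₁ : Y' → Y') ∘ (θ : Y' → Y')) :
    commonValueClass pX φ₀ ((δ₁ : Y' → Y') ∘ ψ₀) =
      commonValueClass pX φ₀ ((δ₂ : Y' → Y') ∘ ψ₀) :=
  commonValueClass_eq_of_doubleCoset_general pX pY φ₀ ψ₀ δ₁ δ₂ h
end

section
/- Let p_X : X̃ → X and p_Y : Ỹ → Y be covering maps whose total spaces are path-connected, locally path-connected and simply connected, let φ, ψ : X → Y be continuous, and let φ̃₀, ψ̃₀ be liftings of φ and ψ respectively. Let δ₁, δ₂ be deck transformations of p_Y. If the sets (p_X × p_X)(cvp(φ̃₀, δ₁ ∘ ψ̃₀)) and (p_X × p_X)(cvp(φ̃₀, δ₂ ∘ ψ̃₀)) have a common element, then there exist deck transformations α, γ of p_X and deck transformations η, θ of p_Y such that φ̃₀ ∘ α = η ∘ φ̃₀, ψ̃₀ ∘ γ = θ ∘ ψ̃₀, and δ₂ = η⁻¹ ∘ δ₁ ∘ θ. -/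
/-!
Points `(u₁, v₁)` of `cvp(φ̃₀, δ₁ ∘ ψ̃₀)` and `(u₂, v₂)` of `cvp(φ̃₀, δ₂ ∘ ψ̃₀)` with the same
image in `X × X` differ by deck transformations `α`, `γ` of `p_X`. Since `X̃` and `Ỹ` are
simply connected, `α` can be matched with a deck transformation `η` of `p_Y` such that
`φ̃₀ ∘ α = η ∘ φ̃₀`: both sides lift `φ ∘ p_X`, and `η` is chosen to make them agree at `u₂`;
likewise `ψ̃₀ ∘ γ = θ ∘ ψ̃₀`. The two lifts `δ₂` and `η⁻¹ ∘ δ₁ ∘ θ` of `p_Y` then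
agree at one point, hence everywhere.
-/

namespace IsCoveringMap

variable {E X : Type*} [TopologicalSpace E] [TopologicalSpace X] {p : E → X}
  [SimplyConnectedSpace E] [LocallyPathConnectedSpace E]

theorem exists_continuous_comp_eq_self (hp : IsCoveringMap p) {e₁ e₂ : E} (h : p e₁ = p e₂) :
    ∃ τ : E → E, Continuous τ ∧ p ∘ τ = p ∧ τ e₁ = e₂ := by
  obtain ⟨τ, ⟨hτe, hτp⟩, -⟩ :=
    hp.existsUnique_continuousMap_lifts ⟨p, hp.continuous⟩ e₁ e₂ h.symm
  exact ⟨τ, τ.continuous, hτp, hτe⟩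

theorem exists_homeomorph_comp_eq_self (hp : IsCoveringMap p) {e₁ e₂ : E} (h : p e₁ = p e₂) :
    ∃ τ : E ≃ₜ E, p ∘ τ = p ∧ τ e₁ = e₂ := by
  obtain ⟨τ, hτc, hτp, hτe⟩ := hp.exists_continuous_comp_eq_self h
  obtain ⟨σ, hσc, hσp, hσe⟩ := hp.exists_continuous_comp_eq_self h.symm
  have hτσ : τ ∘ σ = id := hp.eq_of_comp_eq (hτc.comp hσc) continuous_id
    (by rw [← Function.comp_assoc, hτp, hσp]; rfl) e₂ (by simp [hσe, hτe])
  have hστ : σ ∘ τ = id := hp.eq_of_comp_eq (hσc.comp hτc) continuous_id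
    (by rw [← Function.comp_assoc, hσp, hτp]; rfl) e₁ (by simp [hσe, hτe])
  exact ⟨⟨⟨τ, σ, congrFun hστ, congrFun hτσ⟩, hτc, hσc⟩, hτp, hτe⟩

theorem exists_homeomorph_intertwining {Y' Y : Type*} [TopologicalSpace Y'] [TopologicalSpace Y]
    [SimplyConnectedSpace Y'] [LocallyPathConnectedSpace Y'] {q : Y' → Y}
    (hp : IsCoveringMap p) (hq : IsCoveringMap q)
    {φ : X → Y} {φ' : E → Y'} (hφ' : Continuous φ') (hlift : q ∘ φ' = φ ∘ p)
    {u u' : E} (hu : p u = p u') :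
    ∃ (α : E ≃ₜ E) (η : Y' ≃ₜ Y'),
      p ∘ α = p ∧ q ∘ η = q ∧ η (φ' u) = φ' u' ∧ φ' ∘ α = η ∘ φ' := by
  obtain ⟨α, hαp, hαu⟩ := hp.exists_homeomorph_comp_eq_self hu
  have hφu : q (φ' u) = q (φ' u') := by
    have hlift' := congrFun hlift
    simp only [Function.comp_apply] at hlift'
    rw [hlift', hlift', hu]
  obtain ⟨η, hηq, hηu⟩ := hq.exists_homeomorph_comp_eq_self hφu
  refine ⟨α, η, hαp, hηq, hηu, ?_⟩
  refine hq.eq_of_comp_eq (by fun_prop) (by fun_prop) ?_ u (by simp [hαu, hηu])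
  rw [← Function.comp_assoc, hlift, Function.comp_assoc, hαp, ← hlift, ← Function.comp_assoc,
    hηq]

end IsCoveringMap

theorem doubleCoset_of_commonValueClass_inter_nonempty_general
    {X Y X' Y' : Type*} [TopologicalSpace X] [TopologicalSpace Y]
    [TopologicalSpace X'] [TopologicalSpace Y']
    [LocallyPathConnectedSpace X'] [SimplyConnectedSpace X']
    [LocallyPathConnectedSpace Y'] [SimplyConnectedSpace Y']
    (pX : X' → X) (pY : Y' → Y) (hpX : IsCoveringMap pX) (hpY : IsCoveringMap pY)
    (φ ψ : X → Y)
    (φ₀ ψ₀ : X' → Y') (hφ₀ : Continuous φ₀) (hψ₀ : Continuous ψ₀)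
    (hliftφ : pY ∘ φ₀ = φ ∘ pX) (hliftψ : pY ∘ ψ₀ = ψ ∘ pX)
    (δ₁ δ₂ : Y' ≃ₜ Y') (hδ₁ : pY ∘ δ₁ = pY) (hδ₂ : pY ∘ δ₂ = pY)
    (h : (commonValueClass pX φ₀ ((δ₁ : Y' → Y') ∘ ψ₀) ∩
          commonValueClass pX φ₀ ((δ₂ : Y' → Y') ∘ ψ₀)).Nonempty) :
    ∃ (α γ : X' ≃ₜ X') (η θ : Y' ≃ₜ Y'),
      pX ∘ α = pX ∧ pX ∘ γ = pX ∧ pY ∘ η = pY ∧ pY ∘ θ = pY ∧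
      φ₀ ∘ α = η ∘ φ₀ ∧ ψ₀ ∘ γ = θ ∘ ψ₀ ∧
      (δ₂ : Y' → Y') = (η.symm : Y' → Y') ∘ (δ₁ : Y' → Y') ∘ (θ : Y' → Y') := by
  obtain ⟨_, ⟨⟨u₁, v₁⟩, hcv₁, hq₁⟩, ⟨⟨u₂, v₂⟩, hcv₂, hq₂⟩⟩ := h
  simp only [Set.mem_ofPred_eq, Function.comp_apply] at hcv₁ hcv₂
  obtain ⟨hu, hv⟩ := Prod.ext_iff.mp (hq₂.trans hq₁.symm)
  obtain ⟨α, η, hα, hη, hηu, hφα⟩ :=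
    hpX.exists_homeomorph_intertwining hpY hφ₀ hliftφ hu
  obtain ⟨γ, θ, hγ, hθ, hθv, hψγ⟩ :=
    hpX.exists_homeomorph_intertwining hpY hψ₀ hliftψ hv
  refine ⟨α, γ, η, θ, hα, hγ, hη, hθ, hφα, hψγ, ?_⟩
  refine hpY.eq_of_comp_eq δ₂.continuous (by fun_prop) ?_ (ψ₀ v₂) ?_
  · have hη' : pY ∘ η.symm = pY := (η.toEquiv.comp_symm_eq _ _).mpr hη.symm
    rw [hδ₂, ← Function.comp_assoc, ← Function.comp_assoc, hη', hδ₁, hθ]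
  · simp [hθv, ← hcv₁, ← hηu, hcv₂]

/-- If the common value classes determined by `(φ̃₀, δ₁ ∘ ψ̃₀)` and
`(φ̃₀, δ₂ ∘ ψ̃₀)` have a common element, then there are deck transformations `α, γ` of `p_X`
and `η, θ` of `p_Y` with `φ̃₀ ∘ α = η ∘ φ̃₀`, `ψ̃₀ ∘ γ = θ ∘ ψ̃₀`, and `δ₂ = η⁻¹ ∘ δ₁ ∘ θ`. -/
theorem doubleCoset_of_commonValueClass_inter_nonempty
    {X Y X' Y' : Type*} [TopologicalSpace X] [TopologicalSpace Y]
    [TopologicalSpace X'] [TopologicalSpace Y']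
    [PathConnectedSpace X'] [LocallyPathConnectedSpace X'] [SimplyConnectedSpace X']
    [PathConnectedSpace Y'] [LocallyPathConnectedSpace Y'] [SimplyConnectedSpace Y']
    (pX : X' → X) (pY : Y' → Y) (hpX : IsCoveringMap pX) (hpY : IsCoveringMap pY)
    (φ ψ : X → Y) (hφ : Continuous φ) (hψ : Continuous ψ)
    (φ₀ ψ₀ : X' → Y') (hφ₀ : Continuous φ₀) (hψ₀ : Continuous ψ₀)
    (hliftφ : pY ∘ φ₀ = φ ∘ pX) (hliftψ : pY ∘ ψ₀ = ψ ∘ pX)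
    (δ₁ δ₂ : Y' ≃ₜ Y') (hδ₁ : pY ∘ δ₁ = pY) (hδ₂ : pY ∘ δ₂ = pY)
    (h : (commonValueClass pX φ₀ ((δ₁ : Y' → Y') ∘ ψ₀) ∩
          commonValueClass pX φ₀ ((δ₂ : Y' → Y') ∘ ψ₀)).Nonempty) :
    ∃ (α γ : X' ≃ₜ X') (η θ : Y' ≃ₜ Y'),
      pX ∘ α = pX ∧ pX ∘ γ = pX ∧ pY ∘ η = pY ∧ pY ∘ θ = pY ∧
      φ₀ ∘ α = η ∘ φ₀ ∧ ψ₀ ∘ γ = θ ∘ ψ₀ ∧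
      (δ₂ : Y' → Y') = (η.symm : Y' → Y') ∘ (δ₁ : Y' → Y') ∘ (θ : Y' → Y') :=
  doubleCoset_of_commonValueClass_inter_nonempty_general pX pY hpX hpY φ ψ φ₀ ψ₀ hφ₀ hψ₀ hliftφ
    hliftψ δ₁ δ₂ hδ₁ hδ₂ h
end

section
/- Let (u, v) and (u', v') be elements of cvp(φ, ψ), with coordinates computed via paths c_φ : x₀ ⇝ u, c_ψ : x₀ ⇝ v, c_φ' : x₀ ⇝ u', c_ψ' : x₀ ⇝ v'. Then there exist g, h ∈ π₁(X, x₀) with [w_φ · (φ∘c_φ') · (ψ∘c_ψ')⁻¹ · w_ψ⁻¹] = Φ(g) · [w_φ · (φ∘c_φ) · (ψ∘c_ψ)⁻¹ · w_ψ⁻¹] · Ψ(h) (i.e. the two coordinates lie in the same double coset of Φ(π₁(X, x₀)) and Ψ(π₁(X, x₀))) if and only if there exist a path a in X from u to u' and a path b in X from v to v' such that φ∘a ≃ ψ∘b. -/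
/-!
Everything happens in the fundamental groupoid of `Y`, where a coordinate is the composite
`wφ ≫ φ(cφ) ≫ ψ(cψ)⁻¹ ≫ wψ⁻¹`. Cancelling the reference paths, the equation
`coord' = Φ(g) ≫ coord ≫ Ψ(h)` becomes `φ(a) = ψ(b)` for `a = cφ⁻¹ ≫ g⁻¹ ≫ cφ'` and
`b = cψ⁻¹ ≫ h ≫ cψ'`, and `g ↦ cφ⁻¹ ≫ g⁻¹ ≫ cφ'`, `h ↦ cψ⁻¹ ≫ h ≫ cψ'` are bijections from the
loops at `x₀` onto the classes of paths `u ⇝ u'`, resp. `v ⇝ v'`.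
-/

open CategoryTheory

namespace FundamentalGroupoid

variable {X Y : Type*} [TopologicalSpace X] [TopologicalSpace Y] {x y z : X}

def homMk (p : Path x y) : mk x ⟶ mk y :=
  Path.Homotopic.Quotient.mk p

theorem homMk_surjective : Function.Surjective (homMk : Path x y → (mk x ⟶ mk y)) :=
  Path.Homotopic.Quotient.mk_surjective

theorem homMk_eq_homMk_iff {p q : Path x y} : homMk p = homMk q ↔ p.Homotopic q :=
  Path.Homotopic.Quotient.eq

theorem homMk_trans (p : Path x y) (q : Path y z) : homMk (p.trans q) = homMk p ≫ homMk q :=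
  rfl

theorem homMk_symm (p : Path x y) : homMk p.symm = inv (homMk p) := by
  rw [← Groupoid.inv_eq_inv]
  rfl

theorem homMk_map {f : X → Y} (hf : Continuous f) (p : Path x y) :
    homMk (p.map hf) = (map ⟨f, hf⟩).map (homMk p) :=
  rfl

theorem homMk_cast {x' y' : X} (p : Path x y) (hx : x' = x) (hy : y' = y) :
    homMk (p.cast hx hy) = eqToHom congr(mk $hx) ≫ homMk p ≫ eqToHom congr(mk $hy.symm) :=
  (conj_eqToHom (p := homMk p) hx hy).symm

end FundamentalGroupoid

namespace Coincidence

variable {C D : Type*} [Groupoid C] [Groupoid D] (F G : C ⥤ D) {x₀ u v u' v' : C} {y₀ : D}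

noncomputable def coordinate (wF : y₀ ⟶ F.obj x₀) (wG : y₀ ⟶ G.obj x₀) (cF : x₀ ⟶ u)
    (cG : x₀ ⟶ v) (e : F.obj u ⟶ G.obj v) : y₀ ⟶ y₀ :=
  wF ≫ F.map cF ≫ e ≫ inv (G.map cG) ≫ inv wG

variable {F G} (wF : y₀ ⟶ F.obj x₀) (wG : y₀ ⟶ G.obj x₀) (cF : x₀ ⟶ u) (cG : x₀ ⟶ v)
  (cF' : x₀ ⟶ u') (cG' : x₀ ⟶ v') (e : F.obj u ⟶ G.obj v) (e' : F.obj u' ⟶ G.obj v')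

theorem coordinate_eq_conj_comp_coordinate_comp_conj_iff (g h : x₀ ⟶ x₀) :
    coordinate F G wF wG cF' cG' e' =
        (wF ≫ F.map g ≫ inv wF) ≫ coordinate F G wF wG cF cG e ≫ (wG ≫ G.map h ≫ inv wG) ↔
      F.map (inv cF ≫ inv g ≫ cF') = e ≫ G.map (inv cG ≫ h ≫ cG') ≫ inv e' := by
  simp only [coordinate, Category.assoc, IsIso.inv_hom_id_assoc, cancel_epi, Functor.map_comp,
    Functor.map_inv, IsIso.inv_comp_eq]
  simp only [← Category.assoc, cancel_mono, IsIso.comp_inv_eq]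
  rw [IsIso.eq_comp_inv]

theorem exists_coordinate_eq_conj_comp_coordinate_comp_conj_iff :
    (∃ g h : x₀ ⟶ x₀, coordinate F G wF wG cF' cG' e' =
        (wF ≫ F.map g ≫ inv wF) ≫ coordinate F G wF wG cF cG e ≫ (wG ≫ G.map h ≫ inv wG)) ↔
      ∃ (a : u ⟶ u') (b : v ⟶ v'), F.map a = e ≫ G.map b ≫ inv e' := by
  simp_rw [coordinate_eq_conj_comp_coordinate_comp_conj_iff]
  constructor
  · rintro ⟨g, h, H⟩
    exact ⟨_, _, H⟩
  · rintro ⟨a, b, H⟩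
    exact ⟨cF' ≫ inv a ≫ inv cF, cG ≫ b ≫ inv cG', by simpa using H⟩

end Coincidence

open Coincidence FundamentalGroupoid

/-- Two common value pairs `(u, v)` and `(u', v')` of `φ` and `ψ` have coordinates
lying in the same double coset of `Φ(π₁(X, x₀))` and `Ψ(π₁(X, x₀))` in `π₁(Y, y₀)` if and only if
there are paths `a : u ⇝ u'` and `b : v ⇝ v'` in `X` with `φ∘a` homotopic rel endpoints to
`ψ∘b`. -/
theorem coordinates_same_doubleCoset_iff_same_class
    {X Y : Type*} [TopologicalSpace X] [TopologicalSpace Y]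
    (φ ψ : X → Y) (hφ : Continuous φ) (hψ : Continuous ψ)
    (x₀ : X) (y₀ : Y) (wφ : Path y₀ (φ x₀)) (wψ : Path y₀ (ψ x₀))
    (u v u' v' : X) (huv : φ u = ψ v) (hu'v' : φ u' = ψ v')
    (cφ : Path x₀ u) (cψ : Path x₀ v) (cφ' : Path x₀ u') (cψ' : Path x₀ v') :
    (∃ g h : Path x₀ x₀,
      (wφ.trans ((cφ'.map hφ).trans (((cψ'.map hψ).symm.cast hu'v' rfl).trans
          wψ.symm))).Homotopic
        (((wφ.trans ((g.map hφ).trans wφ.symm)).trans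
            (wφ.trans ((cφ.map hφ).trans (((cψ.map hψ).symm.cast huv rfl).trans
              wψ.symm)))).trans
          (wψ.trans ((h.map hψ).trans wψ.symm)))) ↔
    (∃ (a : Path u u') (b : Path v v'),
      (a.map hφ).Homotopic ((b.map hψ).cast huv hu'v')) := by
  have key := exists_coordinate_eq_conj_comp_coordinate_comp_conj_iff
    (F := map ⟨φ, hφ⟩) (G := map ⟨ψ, hψ⟩) (homMk wφ) (homMk wψ) (homMk cφ) (homMk cψ)
    (homMk cφ') (homMk cψ') (eqToHom congr(mk $huv)) (eqToHom congr(mk $hu'v'))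
  rw [inv_eqToHom] at key
  simp_rw [homMk_surjective.exists₂, homMk_surjective.exists] at key
  simp only [← homMk_eq_homMk_iff, homMk_trans, homMk_symm, homMk_map, homMk_cast]
  -- `(map f).obj (mk x)` and `mk (f x)` agree only up to unfolding `map`; without this the
  -- reassociation below produces ill-typed terms and fails.
  dsimp only [FundamentalGroupoid.map] at key ⊢
  simpa only [coordinate, Category.assoc, eqToHom_refl, Category.comp_id] using key
end

section
/- Let p_X : X̃ → X and p_Y : Ỹ → Y be covering maps whose total spaces are path-connected, locally path-connected and simply connected, let φ, ψ : X → Y be continuous with liftings φ̃, ψ̃, and let (u, v) be an element of the common value class C = (p_X × p_X)(cvp(φ̃, ψ̃)). Then for any (u', v') ∈ cvp(φ, ψ), one has (u', v') ∈ C if and only if there exist a path a in X from u to u' and a path b in X from v to v' such that φ∘a and ψ∘b are homotopic relative to endpoints. -/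
section

variable {X Y X' Y' : Type*} {pX : X' → X} {pY : Y' → Y}

theorem commonValueClass_subset_cvp {φ ψ : X → Y} {φt ψt : X' → Y'}
    (hliftφ : pY ∘ φt = φ ∘ pX) (hliftψ : pY ∘ ψt = ψ ∘ pX) :
    commonValueClass pX φt ψt ⊆ {q | φ q.1 = ψ q.2} := by
  rintro _ ⟨⟨x, y⟩, hcvp, rfl⟩
  calc φ (pX x) = pY (φt x) := (congr_fun hliftφ x).symm
    _ = pY (ψt y) := congrArg pY hcvp
    _ = ψ (pX y) := congr_fun hliftψ y

variable [TopologicalSpace X] [TopologicalSpace Y] [TopologicalSpace X'] [TopologicalSpace Y']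

theorem exists_paths_homotopic_of_lifts_eq [PathConnectedSpace X'] [SimplyConnectedSpace Y']
    (hpX : Continuous pX) (hpY : Continuous pY) {φ ψ : X → Y} {φt ψt : X' → Y'}
    (hφ : Continuous φ) (hψ : Continuous ψ) (hφt : Continuous φt) (hψt : Continuous ψt)
    (hliftφ : pY ∘ φt = φ ∘ pX) (hliftψ : pY ∘ ψt = ψ ∘ pX) {x y x' y' : X'}
    (hcvp : φt x = ψt y) (hcvp' : φt x' = ψt y')
    (h₁ : φ (pX x) = ψ (pX y)) (h₂ : φ (pX x') = ψ (pX y')) :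
    ∃ (a : Path (pX x) (pX x')) (b : Path (pX y) (pX y')),
      (a.map hφ).Homotopic ((b.map hψ).cast h₁ h₂) :=
  let a := PathConnectedSpace.somePath x x'
  let b := PathConnectedSpace.somePath y y'
  ⟨a.map hpX, b.map hpX,
    Nonempty.map
      (fun H ↦ (H.compContinuousMap ⟨pY, hpY⟩).cast
        (by ext t; exact congr_fun hliftφ (a t)) (by ext t; exact congr_fun hliftψ (b t)))
      (SimplyConnectedSpace.paths_homotopic (a.map hφt) ((b.map hψt).cast hcvp hcvp'))⟩

namespace IsCoveringMap

theorem comp_liftPath (hpX : IsCoveringMap pX) (hpY : IsCoveringMap pY)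
    {f : X → Y} {ft : X' → Y'} (hf : Continuous f) (hft : Continuous ft)
    (hlift : pY ∘ ft = f ∘ pX) {x y : X} (γ : Path x y) {e : X'} {e' : Y'}
    (he : γ 0 = pX e) (he' : γ.map hf 0 = pY e') (hee' : ft e = e') :
    ft ∘ hpX.liftPath γ e he = hpY.liftPath (γ.map hf) e' he' := by
  refine (hpY.eq_liftPath_iff he').mpr ⟨hft.comp (ContinuousMap.continuous _), ?_, ?_⟩
  · rw [← Function.comp_assoc, hlift, Function.comp_assoc, hpX.liftPath_lifts]
    rfl
  · rw [Function.comp_apply, hpX.liftPath_zero, hee']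

theorem mem_commonValueClass_of_homotopic (hpX : IsCoveringMap pX) (hpY : IsCoveringMap pY)
    {φ ψ : X → Y} {φt ψt : X' → Y'}
    (hφ : Continuous φ) (hψ : Continuous ψ) (hφt : Continuous φt) (hψt : Continuous ψt)
    (hliftφ : pY ∘ φt = φ ∘ pX) (hliftψ : pY ∘ ψt = ψ ∘ pX)
    {x y : X'} (hcvp : φt x = ψt y) {u' v' : X} (a : Path (pX x) u') (b : Path (pX y) v')
    (h₁ : φ (pX x) = ψ (pX y)) (h₂ : φ u' = ψ v')
    (hab : (a.map hφ).Homotopic ((b.map hψ).cast h₁ h₂)) :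
    (u', v') ∈ commonValueClass pX φt ψt := by
  have hφa : a.map hφ 0 = pY (φt x) := by
    rw [Path.source, ← Function.comp_apply (f := pY), hliftφ]; rfl
  have hψb : b.map hψ 0 = pY (φt x) := by
    rw [Path.source, hcvp, ← Function.comp_apply (f := pY), hliftψ]; rfl
  have hA := hpX.comp_liftPath hpY hφ hφt hliftφ a a.source hφa rfl
  have hB := hpX.comp_liftPath hpY hψ hψt hliftψ b b.source hψb hcvp.symm
  refine ⟨(hpX.liftPath a x a.source 1, hpX.liftPath b y b.source 1), ?_, ?_⟩
  · calc φt (hpX.liftPath a x a.source 1) = hpY.liftPath (a.map hφ) (φt x) hφa 1 := congr_fun hA 1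
      _ = hpY.liftPath (b.map hψ) (φt x) hψb 1 :=
        hpY.liftPath_apply_one_eq_of_homotopicRel hab _ hφa hψb
      _ = ψt (hpX.liftPath b y b.source 1) := (congr_fun hB 1).symm
  · ext
    · exact (congr_fun (hpX.liftPath_lifts a x a.source) 1).trans a.target
    · exact (congr_fun (hpX.liftPath_lifts b y b.source) 1).trans b.target

end IsCoveringMap

end

theorem mem_commonValueClass_iff_exists_paths_general
    {X Y X' Y' : Type*} [TopologicalSpace X] [TopologicalSpace Y]
    [TopologicalSpace X'] [TopologicalSpace Y']
    [PathConnectedSpace X'] [SimplyConnectedSpace Y']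
    (pX : X' → X) (pY : Y' → Y) (hpX : IsCoveringMap pX) (hpY : IsCoveringMap pY)
    (φ ψ : X → Y) (hφ : Continuous φ) (hψ : Continuous ψ)
    (φt ψt : X' → Y') (hφt : Continuous φt) (hψt : Continuous ψt)
    (hliftφ : pY ∘ φt = φ ∘ pX) (hliftψ : pY ∘ ψt = ψ ∘ pX)
    (u v : X) (huvC : (u, v) ∈ commonValueClass pX φt ψt)
    (u' v' : X) (hu'v' : φ u' = ψ v') :
    (u', v') ∈ commonValueClass pX φt ψt ↔
      ∃ (a : Path u u') (b : Path v v') (h₁ : φ u = ψ v),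
        (a.map hφ).Homotopic ((b.map hψ).cast h₁ hu'v') := by
  have h₁ : φ u = ψ v := commonValueClass_subset_cvp hliftφ hliftψ huvC
  obtain ⟨⟨x, y⟩, hcvp, huv⟩ := huvC
  obtain ⟨rfl, rfl⟩ := Prod.mk.inj huv
  constructor
  · rintro ⟨⟨x', y'⟩, hcvp', huv'⟩
    obtain ⟨rfl, rfl⟩ := Prod.mk.inj huv'
    obtain ⟨a, b, hab⟩ := exists_paths_homotopic_of_lifts_eq hpX.continuous hpY.continuous
      hφ hψ hφt hψt hliftφ hliftψ hcvp hcvp' h₁ hu'v'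
    exact ⟨a, b, h₁, hab⟩
  · rintro ⟨a, b, h₁, hab⟩
    exact hpX.mem_commonValueClass_of_homotopic hpY hφ hψ hφt hψt hliftφ hliftψ hcvp a b h₁ hu'v'
      hab

/-- Let `(u, v)` be a member of the common value class
`C = (p_X × p_X)(cvp(φ̃, ψ̃))`. A common value pair `(u', v')` of `φ` and `ψ` belongs to `C`
if and only if there exist paths `a : u ⇝ u'` and `b : v ⇝ v'` in `X` with `φ∘a`
homotopic rel endpoints to `ψ∘b`. -/
theorem mem_commonValueClass_iff_exists_paths
    {X Y X' Y' : Type*} [TopologicalSpace X] [TopologicalSpace Y]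
    [TopologicalSpace X'] [TopologicalSpace Y']
    [PathConnectedSpace X'] [LocallyPathConnectedSpace X'] [SimplyConnectedSpace X']
    [PathConnectedSpace Y'] [LocallyPathConnectedSpace Y'] [SimplyConnectedSpace Y']
    (pX : X' → X) (pY : Y' → Y) (hpX : IsCoveringMap pX) (hpY : IsCoveringMap pY)
    (φ ψ : X → Y) (hφ : Continuous φ) (hψ : Continuous ψ)
    (φt ψt : X' → Y') (hφt : Continuous φt) (hψt : Continuous ψt)
    (hliftφ : pY ∘ φt = φ ∘ pX) (hliftψ : pY ∘ ψt = ψ ∘ pX)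
    (u v : X) (huvC : (u, v) ∈ commonValueClass pX φt ψt)
    (u' v' : X) (hu'v' : φ u' = ψ v') :
    (u', v') ∈ commonValueClass pX φt ψt ↔
      ∃ (a : Path u u') (b : Path v v') (h₁ : φ u = ψ v),
        (a.map hφ).Homotopic ((b.map hψ).cast h₁ hu'v') :=
  mem_commonValueClass_iff_exists_paths_general pX pY hpX hpY φ ψ hφ hψ φt ψt hφt hψt hliftφ hliftψ
    u v huvC u' v' hu'v'
end

section
/- Let H_φ : X × [0,1] → Y be a homotopy from φ to φ' and H_ψ : X × [0,1] → Y a homotopy from ψ to ψ'. Fix basepoints x₀ ∈ X, y₀ ∈ Y, reference paths w_φ from y₀ to φ(x₀) and w_ψ from y₀ to ψ(x₀), and set w_φ' = w_φ · (t ↦ H_φ(x₀, t)) and w_ψ' = w_ψ · (t ↦ H_ψ(x₀, t)). Let (u, v) ∈ cvp(φ, ψ) and (u', v') ∈ cvp(φ', ψ'), and choose paths c_φ : x₀ ⇝ u, c_ψ : x₀ ⇝ v, c_φ' : x₀ ⇝ u', c_ψ' : x₀ ⇝ v'. Then there exist g, h ∈ π₁(X, x₀) with [w_φ' · (φ'∘c_φ')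 · (ψ'∘c_ψ')⁻¹ · w_ψ'⁻¹] = Φ(g) · [w_φ · (φ∘c_φ) · (ψ∘c_ψ)⁻¹ · w_ψ⁻¹] · Ψ(h) in π₁(Y, y₀) if and only if there exist a path a in X from u to u' and a path b in X from v to v' such that the trace paths t ↦ H_φ(a(t), t) and t ↦ H_ψ(b(t), t) are homotopic relative to endpoints in Y. -/
/-- The trace path of a homotopy `H : X × I → Y` along a path `a`, `t ↦ H (a t, t)`. -/
def tracePath {X Y : Type*} [TopologicalSpace X] [TopologicalSpace Y]
    (H : C(X × unitInterval, Y)) {u u' : X} (a : Path u u') :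
    Path (H (u, 0)) (H (u', 1)) where
  toFun t := H (a t, t)
  continuous_toFun := H.continuous.comp ((a.continuous).prodMk continuous_id)
  source' := by simp
  target' := by simp

/-- Continuity of the `t`-slice of a homotopy. -/
theorem sliceCont {X Y : Type*} [TopologicalSpace X] [TopologicalSpace Y]
    (H : C(X × unitInterval, Y)) (t : unitInterval) :
    Continuous fun x : X => H (x, t) :=
  H.continuous.comp (continuous_id.prodMk continuous_const)

/-!
A homotopy `H` from `φ` to `φ'` induces a natural transformation between the functors that `φ`
and `φ'` induce on fundamental groupoids; its component at `x` is the class of `t ↦ H (x, t)`.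
The trace path of `H` along `a : u ⇝ u'` is the image under `H` of the diagonal of the square
`a × [0, 1]`, so it is homotopic to `φ ∘ a` followed by that component at `u'`.
Naturality moves the transported reference paths past `φ' ∘ c_φ'` and `ψ' ∘ c_ψ'`, after which the
equation for `(g, h)` says exactly that the traces along `a = c_φ⁻¹ g⁻¹ c_φ'` and
`b = c_ψ⁻¹ h c_ψ'` agree; conversely `(a, b)` comes from `(c_φ' a⁻¹ c_φ⁻¹, c_ψ b c_ψ'⁻¹)`.
-/

open CategoryTheory FundamentalGroupoid unitInterval

section Groupoid

variable {C D : Type*} [Groupoid C] [Groupoid D] {φ φ' ψ ψ' : C ⥤ D}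
  (α : φ ⟶ φ') (β : ψ ⟶ ψ') {x₀ u v u' v' : C} {y₀ : D}
  (wφ : y₀ ⟶ φ.obj x₀) (wψ : y₀ ⟶ ψ.obj x₀) (e : φ.obj u ⟶ ψ.obj v)
  (e' : φ'.obj u' ⟶ ψ'.obj v') (cφ : x₀ ⟶ u) (cψ : x₀ ⟶ v) (cφ' : x₀ ⟶ u') (cψ' : x₀ ⟶ v')

theorem coordinate_eq_iff_diagonals_eq (g h : x₀ ⟶ x₀) :
    wφ ≫ α.app x₀ ≫ φ'.map cφ' ≫ e' ≫ inv (ψ'.map cψ') ≫ inv (β.app x₀) ≫ inv wψ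
        = wφ ≫ φ.map g ≫ φ.map cφ ≫ e ≫ inv (ψ.map cψ) ≫ ψ.map h ≫ inv wψ ↔
      φ.map (inv cφ ≫ inv g ≫ cφ') ≫ α.app u' =
        e ≫ (ψ.map (inv cψ ≫ h ≫ cψ') ≫ β.app v') ≫ inv e' := by
  have hα : α.app x₀ ≫ φ'.map cφ' = φ.map cφ' ≫ α.app u' := (α.naturality cφ').symm
  have hβ : inv (ψ'.map cψ') ≫ inv (β.app x₀) = inv (β.app v') ≫ inv (ψ.map cψ') := by
    simp only [← IsIso.inv_comp, β.naturality]
  rw [reassoc_of% hα, reassoc_of% hβ, cancel_epi, ← cancel_mono wψ,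
    ← cancel_epi (inv (φ.map cφ) ≫ inv (φ.map g)), ← cancel_mono (ψ.map cψ' ≫ β.app v' ≫ inv e')]
  simp only [Category.assoc, Functor.map_comp, Functor.map_inv, IsIso.inv_hom_id_assoc,
    IsIso.hom_inv_id, IsIso.inv_hom_id, Category.comp_id]

theorem exists_coordinate_eq_iff_exists_diagonals_eq :
    (∃ g h : x₀ ⟶ x₀,
      wφ ≫ α.app x₀ ≫ φ'.map cφ' ≫ e' ≫ inv (ψ'.map cψ') ≫ inv (β.app x₀) ≫ inv wψ
        = wφ ≫ φ.map g ≫ φ.map cφ ≫ e ≫ inv (ψ.map cψ) ≫ ψ.map h ≫ inv wψ) ↔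
      ∃ (a : u ⟶ u') (b : v ⟶ v'), φ.map a ≫ α.app u' = e ≫ (ψ.map b ≫ β.app v') ≫ inv e' := by
  simp only [coordinate_eq_iff_diagonals_eq]
  constructor
  · rintro ⟨g, h, hgh⟩
    exact ⟨_, _, hgh⟩
  · rintro ⟨a, b, hab⟩
    refine ⟨cφ' ≫ inv a ≫ inv cφ, cψ ≫ b ≫ inv cψ', ?_⟩
    simpa using hab

end Groupoid

section Topology

variable {X Y : Type*} [TopologicalSpace X] [TopologicalSpace Y]

def pathClass {x y : X} (p : Path x y) : FundamentalGroupoid.mk x ⟶ FundamentalGroupoid.mk y :=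
  Path.Homotopic.Quotient.mk p

section pathClass

variable {x y z : X}

theorem pathClass_eq_iff (p q : Path x y) : pathClass p = pathClass q ↔ p.Homotopic q :=
  fromPath_eq_iff_homotopic p q

theorem pathClass_surjective : Function.Surjective (pathClass : Path x y → _) :=
  Path.Homotopic.Quotient.mk_surjective

theorem pathClass_trans (p : Path x y) (q : Path y z) :
    pathClass (p.trans q) = pathClass p ≫ pathClass q := rfl

theorem pathClass_symm (p : Path x y) : pathClass p.symm = inv (pathClass p) := by
  rw [← Groupoid.inv_eq_inv]; rfl

theorem pathClass_cast (p : Path x y) {x' y' : X} (hx : x' = x) (hy : y' = y) :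
    pathClass (p.cast hx hy) =
      eqToHom congr(FundamentalGroupoid.mk $hx) ≫ pathClass p ≫
        eqToHom congr(FundamentalGroupoid.mk $hy.symm) := by
  subst hx hy; simp [pathClass]

end pathClass

section Slice

variable (H : C(X × I, Y))

def slice (t : I) : C(X, Y) := ⟨fun x => H (x, t), sliceCont H t⟩

def sliceHomotopy : (slice H 0).Homotopy (slice H 1) where
  toFun p := H (p.2, p.1)
  continuous_toFun := by fun_prop
  map_zero_left _ := rfl
  map_one_left _ := rfl

def sliceNatTrans : map (slice H 0) ⟶ map (slice H 1) :=
  FundamentalGroupoidFunctor.homotopicMapsNatIso (sliceHomotopy H)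

theorem pathClass_map_sliceCont (t : I) {x y : X} (p : Path x y) :
    pathClass (p.map (sliceCont H t)) = (map (slice H t)).map (pathClass p) := rfl

theorem pathClass_tracePath_refl (x : X) :
    pathClass (tracePath H (Path.refl x)) = (sliceNatTrans H).app ⟨x⟩ := rfl

theorem tracePath_homotopic_map_trans {u u' : X} (a : Path u u') :
    (tracePath H a).Homotopic ((a.map (sliceCont H 0)).trans (tracePath H (Path.refl u'))) := by
  have hdiag : (a.prod Path.id).Homotopic
      ((a.prod (Path.refl 0)).trans ((Path.refl u').prod Path.id)) := by
    rw [Path.trans_prod_eq_prod_trans]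
    exact ⟨Path.Homotopic.prodHomotopy (.symm (.transRefl a)) (.symm (.reflTrans _))⟩
  have hmap := hdiag.map H
  rw [Path.map_trans] at hmap
  exact hmap

theorem pathClass_tracePath {u u' : X} (a : Path u u') :
    pathClass (tracePath H a) = (map (slice H 0)).map (pathClass a) ≫ (sliceNatTrans H).app ⟨u'⟩ :=
  (pathClass_eq_iff _ _).2 (tracePath_homotopic_map_trans H a)

end Slice

end Topology

/-- Let `H_φ, H_ψ` be homotopies from `φ` to `φ'` and from `ψ` to `ψ'`, with
reference paths `w_φ, w_ψ` for `φ, ψ` and the transported reference paths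
`w_φ' = w_φ · (t ↦ H_φ(x₀,t))`, `w_ψ' = w_ψ · (t ↦ H_ψ(x₀,t))` for `φ', ψ'`. Then the
coordinate of a common value pair `(u', v')` of `(φ', ψ')` lies in the same double coset as the
coordinate of a common value pair `(u, v)` of `(φ, ψ)` if and only if there are paths
`a : u ⇝ u'`, `b : v ⇝ v'` whose trace paths `t ↦ H_φ(a(t),t)` and `t ↦ H_ψ(b(t),t)` are
homotopic rel endpoints. -/
theorem coordinates_related_iff_trace_paths_homotopic
    {X Y : Type*} [TopologicalSpace X] [TopologicalSpace Y]
    (Hφ Hψ : C(X × unitInterval, Y)) (x₀ : X) (y₀ : Y)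
    (wφ : Path y₀ (Hφ (x₀, 0))) (wψ : Path y₀ (Hψ (x₀, 0)))
    (u v u' v' : X) (huv : Hφ (u, 0) = Hψ (v, 0)) (hu'v' : Hφ (u', 1) = Hψ (v', 1))
    (cφ : Path x₀ u) (cψ : Path x₀ v) (cφ' : Path x₀ u') (cψ' : Path x₀ v') :
    (∃ g h : Path x₀ x₀,
      ((wφ.trans (tracePath Hφ (Path.refl x₀))).trans
          ((cφ'.map (sliceCont Hφ 1)).trans
            (((cψ'.map (sliceCont Hψ 1)).symm.cast hu'v' rfl).trans
              (wψ.trans (tracePath Hψ (Path.refl x₀))).symm))).Homotopic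
        (((wφ.trans ((g.map (sliceCont Hφ 0)).trans wφ.symm)).trans
            (wφ.trans ((cφ.map (sliceCont Hφ 0)).trans
              (((cψ.map (sliceCont Hψ 0)).symm.cast huv rfl).trans wψ.symm)))).trans
          (wψ.trans ((h.map (sliceCont Hψ 0)).trans wψ.symm)))) ↔
    (∃ (a : Path u u') (b : Path v v'),
      (tracePath Hφ a).Homotopic ((tracePath Hψ b).cast huv hu'v')) := by
  have key := exists_coordinate_eq_iff_exists_diagonals_eq (sliceNatTrans Hφ) (sliceNatTrans Hψ)
    (pathClass wφ) (pathClass wψ) (eqToHom congr(FundamentalGroupoid.mk $huv))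
    (eqToHom congr(FundamentalGroupoid.mk $hu'v'))
    (pathClass cφ) (pathClass cψ) (pathClass cφ') (pathClass cψ')
  rw [pathClass_surjective.exists₂, pathClass_surjective.exists] at key
  simp only [pathClass_surjective.exists, ← pathClass_tracePath, inv_eqToHom] at key
  simp only [← pathClass_tracePath_refl, ← pathClass_map_sliceCont] at key
  simp only [← pathClass_eq_iff, pathClass_trans, pathClass_symm, pathClass_cast, Category.assoc,
    IsIso.inv_comp, eqToHom_refl, Category.comp_id, IsIso.inv_hom_id_assoc]
  exact key
end
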